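/- arXiv:2509.22571 — 2 statements merged into one kernel-verified Lean document; each statement's English description precedes it below -/
import Mathlib

section
/- For n ≥ 8, the visibility polynomial of the wheel graph W_n is V(W_n)(x) = (1+x)^{n-1} + x + (n-1)x^2 + 2(n-1)x^3. -/
open SimpleGraph Polynomial

/-- Two vertices `u` and `v` are `X`-visible in `G` if some shortest `u`–`v` path
has no internal vertex in `X`, i.e. its support meets `X` only possibly in `{u, v}`. -/
def XVisible {V : Type*} (G : SimpleGraph V) (X : Set V) (u v : V) : Prop :=
  ∃ p : G.Walk u v, p.IsPath ∧ p.length = G.dist u v ∧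
    ∀ w ∈ p.support, w ∈ X → w = u ∨ w = v

/-- `X` is a mutual-visibility set of `G` if every pair of vertices of `X` is `X`-visible. -/
def MutualVisibilitySet {V : Type*} (G : SimpleGraph V) (X : Set V) : Prop :=
  ∀ u ∈ X, ∀ v ∈ X, XVisible G X u v

open Classical in
/-- The visibility polynomial: `∑ m_k x^k` where `m_k` is the number of
mutual-visibility sets of cardinality `k`. -/
noncomputable def visPoly {V : Type*} [Fintype V] (G : SimpleGraph V) : Polynomial ℕ :=
  ∑ S ∈ Finset.univ.powerset.filter (fun S : Finset V => MutualVisibilitySet G ↑S),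
    Polynomial.X ^ S.card

/-- The wheel graph with rim `cycleGraph m` (on `some`-vertices) and hub `none`. -/
def wheelGraph (m : ℕ) : SimpleGraph (Option (Fin m)) :=
  SimpleGraph.fromRel (fun u v =>
    (u = none ∧ v ≠ none) ∨
    ∃ i j : Fin m, u = some i ∧ v = some j ∧ (SimpleGraph.cycleGraph m).Adj i j)

/-- The shell graph with path `pathGraph m` (on `some`-vertices) and apex `none`. -/
def shellGraph (m : ℕ) : SimpleGraph (Option (Fin m)) :=
  SimpleGraph.fromRel (fun u v =>
    (u = none ∧ v ≠ none) ∨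
    ∃ i j : Fin m, u = some i ∧ v = some j ∧ (SimpleGraph.pathGraph m).Adj i j)

/-- The bow graph: apex `none` joined to two disjoint paths of `a` and `b` vertices. -/
def bowGraph (a b : ℕ) : SimpleGraph (Option (Fin a ⊕ Fin b)) :=
  SimpleGraph.fromRel (fun u v =>
    (u = none ∧ v ≠ none) ∨
    (∃ i j : Fin a, u = some (Sum.inl i) ∧ v = some (Sum.inl j) ∧ (SimpleGraph.pathGraph a).Adj i j) ∨
    (∃ i j : Fin b, u = some (Sum.inr i) ∧ v = some (Sum.inr j) ∧ (SimpleGraph.pathGraph b).Adj i j))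

/-- The friendship graph: center `none`; the `i`-th triangle has the two
noncentral vertices `some (i, 0)` and `some (i, 1)`. -/
def friendshipGraph (n : ℕ) : SimpleGraph (Option (Fin n × Fin 2)) :=
  SimpleGraph.fromRel (fun u v =>
    (u = none ∧ v ≠ none) ∨
    ∃ (i : Fin n) (x y : Fin 2), u = some (i, x) ∧ v = some (i, y) ∧ x ≠ y)

/-- The helm graph: a copy of the wheel (the `Sum.inl`-vertices) together with a
pendant vertex `Sum.inr k` attached to each rim vertex `Sum.inl (some k)`. -/
def helmGraph (m : ℕ) : SimpleGraph (Option (Fin m) ⊕ Fin m) :=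
  SimpleGraph.fromRel (fun u v =>
    (∃ x y : Option (Fin m), u = Sum.inl x ∧ v = Sum.inl y ∧ (wheelGraph m).Adj x y) ∨
    (∃ k : Fin m, u = Sum.inl (some k) ∧ v = Sum.inr k))

/-- `W` is a `c_Q`-visible set: `W ⊆ V \ Q`, every pair of vertices of `W` is
`Q`-visible, and `{u, w}` is `Q`-visible for all `u ∈ Q`, `w ∈ W`. -/
def CQVisible {V : Type*} (G : SimpleGraph V) (Q W : Set V) : Prop :=
  W ⊆ Qᶜ ∧ (∀ u ∈ W, ∀ v ∈ W, XVisible G Q u v) ∧ (∀ u ∈ Q, ∀ w ∈ W, XVisible G Q u w)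

/-- An absolute `c_Q`-visible set: a `c_Q`-visible set for which `Q` is moreover a
mutual-visibility set of `G`. -/
def AbsoluteCQVisible {V : Type*} (G : SimpleGraph V) (Q W : Set V) : Prop :=
  CQVisible G Q W ∧ MutualVisibilitySet G Q


/-!
The hub of the wheel is a common neighbour of all rim vertices, so every set avoiding the hub is a
mutual-visibility set; these give `(1 + x)^(n-1)`. Once the hub belongs to `X`, it blocks every
geodesic through it, so two rim vertices of `X` see each other only if they are adjacent or have a
common rim neighbour outside `X`. On a cycle of length at least `7` this leaves at most two rim
vertices, at cyclic distance `1` or `2`: the sets `{h}`, `{h, i}`, `{h, i, i + 1}`, `{h, i, i + 2}`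
give `x + (n - 1) x^2 + 2 (n - 1) x^3`.
-/

open Finset

section Visibility

variable {V : Type*} {G : SimpleGraph V} {X : Set V} {u v w : V}

lemma xVisible_self (G : SimpleGraph V) (X : Set V) (u : V) : XVisible G X u u :=
  ⟨.nil, .nil, by simp, by simp⟩

lemma xVisible_of_adj (h : G.Adj u v) : XVisible G X u v :=
  ⟨h.toWalk, by simp [h.ne], by simp [dist_eq_one_iff_adj.mpr h], by simp⟩

lemma dist_eq_two_of_adj_of_adj (huw : G.Adj u w) (hwv : G.Adj w v) (hne : u ≠ v)
    (hnadj : ¬G.Adj u v) : G.dist u v = 2 := by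
  have hle : G.dist u v ≤ 2 := by simpa using dist_le (huw.toWalk.append hwv.toWalk)
  have hpos : G.dist u v ≠ 0 :=
    dist_ne_zero_iff_ne_and_reachable.mpr ⟨hne, ⟨huw.toWalk.append hwv.toWalk⟩⟩
  have hone : G.dist u v ≠ 1 := fun h => hnadj (dist_eq_one_iff_adj.mp h)
  omega

/-- A geodesic of length two has exactly one internal vertex. -/
lemma xVisible_iff_of_dist_eq_two (h : G.dist u v = 2) :
    XVisible G X u v ↔ ∃ w ∉ X, G.Adj u w ∧ G.Adj w v := by
  constructor
  · rintro ⟨p, -, hlen, hX⟩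
    rw [h] at hlen
    obtain ⟨w, huw, hwv, hw⟩ : ∃ w, G.Adj u w ∧ G.Adj w v ∧ w ∈ p.support := by
      have h0 := p.adj_getVert_succ (i := 0) (by omega)
      have h1 := p.adj_getVert_succ (i := 1) (by omega)
      rw [Walk.getVert_zero] at h0
      rw [show 1 + 1 = p.length by omega, Walk.getVert_length] at h1
      exact ⟨_, h0, h1, p.getVert_mem_support 1⟩
    refine ⟨w, fun hwX => ?_, huw, hwv⟩
    rcases hX w hw hwX with rfl | rfl
    exacts [huw.ne rfl, hwv.ne rfl]
  · rintro ⟨w, hwX, huw, hwv⟩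
    let p := huw.toWalk.append hwv.toWalk
    have hlen : p.length = G.dist u v := by simp [p, h]
    refine ⟨p, p.isPath_of_length_eq_dist hlen, hlen, fun x hx hxX => ?_⟩
    simp only [p, Walk.support_append, Adj.support_toWalk, List.tail_cons, List.cons_append,
      List.nil_append, List.mem_cons, List.not_mem_nil, or_false] at hx
    rcases hx with rfl | rfl | rfl
    exacts [Or.inl rfl, absurd hxX hwX, Or.inr rfl]

lemma mutualVisibilitySet_of_forall_adj (hw : w ∉ X) (hadj : ∀ u ∈ X, G.Adj u w) :
    MutualVisibilitySet G X := by
  intro u hu v hv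
  by_cases huv : u = v
  · exact huv ▸ xVisible_self G X u
  by_cases h : G.Adj u v
  · exact xVisible_of_adj h
  have hdist := dist_eq_two_of_adj_of_adj (hadj u hu) (hadj v hv).symm huv h
  exact (xVisible_iff_of_dist_eq_two hdist).mpr ⟨w, hw, hadj u hu, (hadj v hv).symm⟩

def TwoStepVisible (G : SimpleGraph V) (T : Set V) : Prop :=
  ∀ u ∈ T, ∀ v ∈ T, u ≠ v → G.Adj u v ∨ ∃ w ∉ T, G.Adj u w ∧ G.Adj w v

lemma twoStepVisible_pair_iff (huv : u ≠ v) :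
    TwoStepVisible G {u, v} ↔ G.Adj u v ∨ ∃ w, w ≠ u ∧ w ≠ v ∧ G.Adj u w ∧ G.Adj w v := by
  constructor
  · intro h
    simpa [not_or, and_assoc] using h u (by simp) v (by simp) huv
  · rintro (h | ⟨w, hwu, hwv, huw, hwv'⟩) x (rfl | rfl) y (rfl | rfl) hxy <;>
      first
      | exact absurd rfl hxy
      | simp only [Set.mem_insert_iff, Set.mem_singleton_iff, not_or]
    exacts [.inl h, .inl h.symm, .inr ⟨w, ⟨hwu, hwv⟩, huw, hwv'⟩,
      .inr ⟨w, ⟨hwu, hwv⟩, hwv'.symm, huw.symm⟩]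

end Visibility

section Cone

variable {V : Type*} {G : SimpleGraph V}

/-- The join `G ∨ K₁`, with apex `none`. -/
def coneGraph (G : SimpleGraph V) : SimpleGraph (Option V) :=
  SimpleGraph.fromRel fun u v =>
    (u = none ∧ v ≠ none) ∨ ∃ i j : V, u = some i ∧ v = some j ∧ G.Adj i j

lemma wheelGraph_eq_coneGraph (m : ℕ) : wheelGraph m = coneGraph (cycleGraph m) := rfl

lemma coneGraph_adj_none_some (v : V) : (coneGraph G).Adj none (some v) := by
  simp [coneGraph]

lemma coneGraph_adj_some_some {u v : V} : (coneGraph G).Adj (some u) (some v) ↔ G.Adj u v := by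
  simp only [coneGraph, fromRel_adj, ne_eq, Option.some.injEq, reduceCtorEq, false_and, false_or,
    exists_and_left, exists_eq_left']
  exact ⟨fun ⟨_, h⟩ => h.elim id fun h => h.symm, fun h => ⟨h.ne, .inl h⟩⟩

lemma mutualVisibilitySet_coneGraph_of_none_notMem {X : Set (Option V)} (h : none ∉ X) :
    MutualVisibilitySet (coneGraph G) X := by
  refine mutualVisibilitySet_of_forall_adj h fun u hu => ?_
  obtain ⟨v, rfl⟩ := Option.ne_none_iff_exists'.mp (ne_of_mem_of_not_mem hu h)
  exact (coneGraph_adj_none_some v).symm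

lemma xVisible_coneGraph_some_some_iff {T : Set V} {u v : V} (huv : u ≠ v) :
    XVisible (coneGraph G) (insert none (some '' T)) (some u) (some v) ↔
      G.Adj u v ∨ ∃ w ∉ T, G.Adj u w ∧ G.Adj w v := by
  by_cases h : G.Adj u v
  · simpa [h] using xVisible_of_adj (coneGraph_adj_some_some.mpr h)
  have hdist := dist_eq_two_of_adj_of_adj (coneGraph_adj_none_some u).symm
    (coneGraph_adj_none_some v) (by simpa using huv) (by rwa [coneGraph_adj_some_some])
  rw [xVisible_iff_of_dist_eq_two hdist]
  simp only [Option.exists, Set.mem_insert_iff, reduceCtorEq, false_or,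
    (Option.some_injective V).mem_set_image, coneGraph_adj_some_some, h]
  simp

lemma mutualVisibilitySet_coneGraph_insert_none_iff (T : Set V) :
    MutualVisibilitySet (coneGraph G) (insert none (some '' T)) ↔ TwoStepVisible G T := by
  constructor
  · intro hX u hu v hv huv
    exact (xVisible_coneGraph_some_some_iff huv).mp
      (hX _ (Or.inr ⟨u, hu, rfl⟩) _ (Or.inr ⟨v, hv, rfl⟩))
  · rintro hT _ (rfl | ⟨u, hu, rfl⟩) _ (rfl | ⟨v, hv, rfl⟩)
    · exact xVisible_self _ _ _
    · exact xVisible_of_adj (coneGraph_adj_none_some v)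
    · exact xVisible_of_adj (coneGraph_adj_none_some u).symm
    · by_cases huv : u = v
      · exact huv ▸ xVisible_self _ _ _
      exact (xVisible_coneGraph_some_some_iff huv).mpr (hT u hu v hv huv)

end Cone

section Counting

lemma sum_finset_option {α M : Type*} [Fintype α] [AddCommMonoid M] (f : Finset (Option α) → M) :
    ∑ S, f S = ∑ T : Finset α, f (T.map .some) + ∑ T : Finset α, f (insertNone T) := by
  classical
  rw [← sum_filter_not_add_sum_filter univ (none ∈ ·)]
  congr 1 <;> symm
  · refine sum_nbij' (map .some) eraseNone (by simp) (by simp) (by simp [eraseNone_map_some])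
      (fun S hS => ?_) (by simp)
    rw [map_some_eraseNone, erase_eq_of_notMem (by simpa using hS)]
  · refine sum_nbij' insertNone eraseNone (by simp) (by simp) (by simp [eraseNone_insertNone])
      (fun S hS => ?_) (by simp)
    rw [insertNone_eraseNone, insert_eq_of_mem (by simpa using hS)]

lemma Finset.coe_insertNone {α : Type*} (T : Finset α) :
    (insertNone T : Set (Option α)) = insert none (some '' T) := by
  ext (_ | x) <;> simp

lemma sum_pow_card_filter_card_le_one {α R : Type*} [Fintype α] [CommSemiring R] (x : R) :
    ∑ T ∈ univ.filter (fun T : Finset α => #T ≤ 1), x ^ #T = 1 + Fintype.card α • x := by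
  classical
  have : univ.filter (fun T : Finset α => #T ≤ 1) = powersetCard 0 univ ∪ powersetCard 1 univ := by
    ext T; simp [mem_powersetCard, Nat.le_one_iff_eq_zero_or_eq_one]
  rw [this, sum_union, powersetCard_zero, powersetCard_one]
  · simp
  · exact disjoint_left.mpr fun T h0 h1 => by simp_all [mem_powersetCard]

open Classical in
lemma visPoly_coneGraph {V : Type*} [Fintype V] (G : SimpleGraph V) :
    visPoly (coneGraph G) =
      (1 + X) ^ Fintype.card V + X * ∑ T ∈ univ.filter fun T : Finset V => TwoStepVisible G ↑T,
        X ^ #T := by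
  rw [visPoly, powerset_univ, sum_filter, sum_finset_option, mul_sum, sum_filter]
  congr 1
  · have hMV (T : Finset V) : MutualVisibilitySet (coneGraph G) ↑(T.map .some) :=
      mutualVisibilitySet_coneGraph_of_none_notMem (by simp)
    simp only [hMV, if_true, card_map]
    simpa [powerset_univ, add_comm] using sum_pow_mul_eq_add_pow (X : ℕ[X]) 1 univ
  · refine sum_congr rfl fun T _ => ?_
    rw [coe_insertNone, mutualVisibilitySet_coneGraph_insert_none_iff, card_insertNone, pow_succ']

end Counting

section Cycle

variable {m : ℕ}

lemma Fin.val_sub_add_val_eq (a b : Fin m) :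
    (a - b).val + b.val = a.val ∨ (a - b).val + b.val = a.val + m := by
  rcases le_or_gt b a with h | h
  · rw [Fin.coe_sub_iff_le.mpr h]; have : b.val ≤ a.val := h; omega
  · rw [Fin.coe_sub_iff_lt.mpr h]; have : a.val < b.val := h; omega

lemma cycleGraph_adj_iff_val (hm : 2 ≤ m) {i j : Fin m} :
    (cycleGraph m).Adj i j ↔
      i.val + 1 = j.val ∨ j.val + 1 = i.val ∨ i.val + 1 = j.val + m ∨ j.val + 1 = i.val + m := by
  have := Fin.val_sub_add_val_eq i j
  have := Fin.val_sub_add_val_eq j i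
  have := (i - j).isLt
  have := (j - i).isLt
  rw [cycleGraph_adj']
  constructor <;> intro h <;> omega

/-- Three vertices pairwise at cyclic distance at most two lie on an arc `x, x + 1, x + 2`
(this needs `m ≥ 7`), and then the only common neighbour `x + 1` of `x` and `x + 2` is in `T`. -/
lemma TwoStepVisible.card_le_two (hm : 7 ≤ m) {T : Finset (Fin m)}
    (hT : TwoStepVisible (cycleGraph m) ↑T) : #T ≤ 2 := by
  by_contra! h
  obtain ⟨a, b, c, ha, hb, hc, hab, hac, hbc⟩ := two_lt_card_iff.mp h
  have pair {x y : Fin m} (hx : x ∈ T) (hy : y ∈ T) (hxy : x ≠ y) :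
      (cycleGraph m).Adj x y ∨ ∃ k : Fin m, k.val ≠ a.val ∧ k.val ≠ b.val ∧ k.val ≠ c.val ∧
        (cycleGraph m).Adj x k ∧ (cycleGraph m).Adj k y := by
    refine (hT x hx y hy hxy).imp_right fun ⟨k, hk, hxk, hky⟩ =>
      ⟨k, fun e => hk ?_, fun e => hk ?_, fun e => hk ?_, hxk, hky⟩
    exacts [Fin.ext e ▸ ha, Fin.ext e ▸ hb, Fin.ext e ▸ hc]
  have rab := pair ha hb hab
  have rac := pair ha hc hac
  have rbc := pair hb hc hbc
  simp only [cycleGraph_adj_iff_val (by omega : 2 ≤ m)] at rab rac rbc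
  rw [Ne, Fin.ext_iff] at hab hac hbc
  have := a.isLt; have := b.isLt; have := c.isLt
  rcases rab with rab | ⟨k1, hk1⟩ <;> rcases rac with rac | ⟨k2, hk2⟩ <;>
    rcases rbc with rbc | ⟨k3, hk3⟩ <;> omega

def shortChords (m : ℕ) [NeZero m] : Finset (Finset (Fin m)) :=
  (univ ×ˢ {1, 2}).image fun p => {p.1, p.1 + p.2}

variable [NeZero m]

lemma val_eq_one_or_two_of_mem_one_two (hm : 3 ≤ m) {d : Fin m}
    (hd : d ∈ ({1, 2} : Finset (Fin m))) : d.val = 1 ∨ d.val = 2 := by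
  rcases mem_insert.mp hd with rfl | hd
  · simp [Nat.mod_eq_of_lt (show 1 < m by omega)]
  · rw [mem_singleton.mp hd]; simp [Nat.mod_eq_of_lt (show 2 < m by omega)]

lemma card_shortChords (hm : 5 ≤ m) : #(shortChords m) = 2 * m := by
  have h12 : (1 : Fin m) ≠ 2 := by
    intro h
    have := congrArg Fin.val h
    simp [Nat.mod_eq_of_lt (show 2 < m by omega), Nat.mod_eq_of_lt (show 1 < m by omega)] at this
  rw [shortChords, card_image_of_injOn, card_product, card_univ, Fintype.card_fin, card_pair h12,
    mul_comm]
  rintro ⟨i, d⟩ hd ⟨j, e⟩ he (h : ({i, i + d} : Finset (Fin m)) = {j, j + e})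
  have hd : d.val = 1 ∨ d.val = 2 :=
    val_eq_one_or_two_of_mem_one_two (by omega) (mem_product.mp hd).2
  have he : e.val = 1 ∨ e.val = 2 :=
    val_eq_one_or_two_of_mem_one_two (by omega) (mem_product.mp he).2
  have hi : i ∈ ({j, j + e} : Finset (Fin m)) := h ▸ mem_insert_self _ _
  have hj : j ∈ ({i, i + d} : Finset (Fin m)) := h ▸ mem_insert_self _ _
  have hid : i + d ∈ ({j, j + e} : Finset (Fin m)) := h ▸ mem_insert_of_mem (mem_singleton_self _)
  simp only [mem_insert, mem_singleton, Fin.ext_iff, Fin.val_add_eq_ite] at hi hj hid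
  have := i.isLt; have := j.isLt
  simp only [Prod.mk.injEq, Fin.ext_iff]
  split_ifs at hi hj hid <;> omega

lemma card_eq_two_of_mem_shortChords (hm : 3 ≤ m) {T : Finset (Fin m)} (hT : T ∈ shortChords m) :
    #T = 2 := by
  obtain ⟨⟨i, d⟩, hd, rfl⟩ := mem_image.mp hT
  have hd : d.val = 1 ∨ d.val = 2 := val_eq_one_or_two_of_mem_one_two hm (mem_product.mp hd).2
  refine card_pair fun (h : i = i + d) => ?_
  have hval := congrArg Fin.val h
  rw [Fin.val_add_eq_ite] at hval
  have := i.isLt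
  split_ifs at hval <;> omega

lemma pair_mem_shortChords (hm : 3 ≤ m) {i j : Fin m} (h : (j - i).val = 1 ∨ (j - i).val = 2) :
    {i, j} ∈ shortChords m := by
  refine mem_image.mpr ⟨(i, j - i), mem_product.mpr ⟨mem_univ _, ?_⟩, by simp⟩
  rcases h with h | h
  · simp [Fin.ext_iff, h, Nat.mod_eq_of_lt (show 1 < m by omega)]
  · simp [Fin.ext_iff, h, Nat.mod_eq_of_lt (show 2 < m by omega)]

lemma twoStepVisible_cycleGraph_iff (hm : 7 ≤ m) {T : Finset (Fin m)} :
    TwoStepVisible (cycleGraph m) ↑T ↔ #T ≤ 1 ∨ T ∈ shortChords m := by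
  have hadj := @cycleGraph_adj_iff_val m (by omega)
  constructor
  · intro hT
    refine or_iff_not_imp_left.mpr fun h1 => ?_
    obtain ⟨i, j, hij, rfl⟩ := card_eq_two.mp (show #T = 2 by have := hT.card_le_two hm; omega)
    rw [coe_pair, twoStepVisible_pair_iff hij] at hT
    simp only [hadj] at hT
    rw [Ne, Fin.ext_iff] at hij
    have := i.isLt; have := j.isLt
    have := Fin.val_sub_add_val_eq j i; have := Fin.val_sub_add_val_eq i j
    have : ((j - i).val = 1 ∨ (j - i).val = 2) ∨ ((i - j).val = 1 ∨ (i - j).val = 2) := by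
      rcases hT with h | ⟨k, hki, hkj, hk⟩ <;> [omega; (rw [Ne, Fin.ext_iff] at hki hkj; omega)]
    rcases this with h | h
    · exact pair_mem_shortChords (by omega) h
    · exact pair_comm j i ▸ pair_mem_shortChords (by omega) h
  · rintro (h | h)
    · intro u hu v hv huv
      exact absurd (card_le_one.mp h u hu v hv) huv
    obtain ⟨⟨i, d⟩, hd, rfl⟩ := mem_image.mp h
    have hd : d.val = 1 ∨ d.val = 2 :=
      val_eq_one_or_two_of_mem_one_two (by omega) (mem_product.mp hd).2
    have hid := Fin.val_add_eq_ite i d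
    have hi1 := Fin.val_add_eq_ite i 1
    have h1 : ((1 : Fin m) : ℕ) = 1 := by simp [Nat.mod_eq_of_lt (show 1 < m by omega)]
    rw [h1] at hi1
    have := i.isLt
    have hne : i ≠ i + d := by rw [Ne, Fin.ext_iff]; split_ifs at hid <;> omega
    rw [coe_pair, twoStepVisible_pair_iff hne, hadj]
    rcases hd with hd | hd
    · left; split_ifs at hid <;> omega
    · right
      refine ⟨i + 1, ?_, ?_, ?_, ?_⟩ <;> simp only [Ne, Fin.ext_iff, hadj] <;>
        split_ifs at hid hi1 <;> omega

open Classical in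
lemma sum_twoStepVisible_cycleGraph (hm : 7 ≤ m) :
    ∑ T ∈ univ.filter fun T : Finset (Fin m) => TwoStepVisible (cycleGraph m) ↑T,
        (X : ℕ[X]) ^ #T = 1 + (m : ℕ[X]) * X + 2 * (m : ℕ[X]) * X ^ 2 := by
  have hsplit : univ.filter (fun T : Finset (Fin m) => TwoStepVisible (cycleGraph m) ↑T) =
      univ.filter (fun T : Finset (Fin m) => #T ≤ 1) ∪ shortChords m := by
    ext T
    simp [twoStepVisible_cycleGraph_iff hm]
  have hdisj : Disjoint (univ.filter fun T : Finset (Fin m) => #T ≤ 1) (shortChords m) :=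
    disjoint_left.mpr fun T h1 h2 => by
      have := card_eq_two_of_mem_shortChords (by omega) h2
      simp at h1; omega
  rw [hsplit, sum_union hdisj, sum_pow_card_filter_card_le_one,
    sum_congr rfl fun T hT => by rw [card_eq_two_of_mem_shortChords (by omega) hT], sum_const,
    card_shortChords (by omega)]
  simp [nsmul_eq_mul]

end Cycle

theorem visPoly_wheel (n : ℕ) (hn : 8 ≤ n) :
    visPoly (wheelGraph (n - 1)) =
      (1 + Polynomial.X) ^ (n - 1) + Polynomial.X +
        Polynomial.C (n - 1) * Polynomial.X ^ 2 +
        Polynomial.C (2 * (n - 1)) * Polynomial.X ^ 3 := by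
  have : NeZero (n - 1) := ⟨by omega⟩
  rw [wheelGraph_eq_coneGraph, visPoly_coneGraph, Fintype.card_fin,
    sum_twoStepVisible_cycleGraph (by omega), eq_natCast C, eq_natCast C]
  push_cast
  ring
end

section
/- Let n ≥ 8 and let W_n be the wheel graph with hub h. If Q is a mutual-visibility set of W_n with h ∉ Q, then the complement V(W_n) \ Q is a c_Q-visible set of W_n; that is, every pair of vertices of V(W_n) \ Q is Q-visible, and for every u ∈ Q and w ∈ V(W_n) \ Q the pair {u,w} is Q-visible. Consequently V(W_n) \ Q is the unique maximal absolute c_Q-visible set of W_n. -/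
open SimpleGraph Polynomial

lemma wheel_adj_hub {m : ℕ} (i : Fin m) : (wheelGraph m).Adj none (some i) := by
  simp [wheelGraph, SimpleGraph.fromRel_adj]

lemma wheel_xvis {m : ℕ} (Q : Set (Option (Fin m))) (hh : none ∉ Q)
    (u v : Option (Fin m)) : XVisible (wheelGraph m) Q u v := by
  by_cases huv : u = v
  · subst huv
    exact ⟨SimpleGraph.Walk.nil, by simp, SimpleGraph.dist_self.symm, by simp⟩
  by_cases hadj : (wheelGraph m).Adj u v
  · refine ⟨SimpleGraph.Walk.cons hadj SimpleGraph.Walk.nil, ?_, ?_, ?_⟩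
    · simp [hadj.ne]
    · simp [SimpleGraph.dist_eq_one_iff_adj.mpr hadj]
    · intro w hw _
      simpa using hw
  · obtain ⟨i, rfl⟩ : ∃ i, u = some i := by
      cases u with
      | none =>
        cases v with
        | none => exact absurd rfl huv
        | some j => exact absurd (wheel_adj_hub j) hadj
      | some i => exact ⟨i, rfl⟩
    obtain ⟨j, rfl⟩ : ∃ j, v = some j := by
      cases v with
      | none => exact absurd (wheel_adj_hub i).symm hadj
      | some j => exact ⟨j, rfl⟩
    have h1 : (wheelGraph m).Adj (some i) none := (wheel_adj_hub i).symm
    have h2 : (wheelGraph m).Adj none (some j) := wheel_adj_hub j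
    refine ⟨SimpleGraph.Walk.cons h1 (SimpleGraph.Walk.cons h2 SimpleGraph.Walk.nil), ?_, ?_, ?_⟩
    · simp [SimpleGraph.Walk.isPath_def, huv]
    · have hle : (wheelGraph m).dist (some i) (some j) ≤ 2 := by
        simpa using SimpleGraph.dist_le
          (SimpleGraph.Walk.cons h1 (SimpleGraph.Walk.cons h2 SimpleGraph.Walk.nil))
      have hne : (wheelGraph m).dist (some i) (some j) ≠ 1 := fun h =>
        hadj (SimpleGraph.dist_eq_one_iff_adj.mp h)
      have hpos : 0 < (wheelGraph m).dist (some i) (some j) :=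
        SimpleGraph.Reachable.pos_dist_of_ne
          ⟨SimpleGraph.Walk.cons h1 (SimpleGraph.Walk.cons h2 SimpleGraph.Walk.nil)⟩ huv
      simp only [SimpleGraph.Walk.length_cons, SimpleGraph.Walk.length_nil]
      omega
    · intro w hw hwQ
      simp only [SimpleGraph.Walk.support_cons, SimpleGraph.Walk.support_nil,
        List.mem_cons, List.mem_singleton] at hw
      rcases hw with rfl | rfl | rfl | h
      · exact Or.inl rfl
      · exact absurd hwQ hh
      · exact Or.inr rfl
      · simp at h

theorem wheel_compl_unique_maximal_absolute_cQVisible (n : ℕ) (hn : 8 ≤ n)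
    (Q : Set (Option (Fin (n - 1))))
    (hQ : MutualVisibilitySet (wheelGraph (n - 1)) Q) (hh : none ∉ Q) :
    CQVisible (wheelGraph (n - 1)) Q Qᶜ ∧
    AbsoluteCQVisible (wheelGraph (n - 1)) Q Qᶜ ∧
    (∀ W : Set (Option (Fin (n - 1))),
      AbsoluteCQVisible (wheelGraph (n - 1)) Q W →
      (∀ W' : Set (Option (Fin (n - 1))),
        AbsoluteCQVisible (wheelGraph (n - 1)) Q W' → W ⊆ W' → W' = W) →
      W = Qᶜ) := by
  have hcq : CQVisible (wheelGraph (n - 1)) Q Qᶜ :=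
    ⟨subset_rfl, fun u _ v _ => wheel_xvis Q hh u v, fun u _ w _ => wheel_xvis Q hh u w⟩
  have habs : AbsoluteCQVisible (wheelGraph (n - 1)) Q Qᶜ := ⟨hcq, hQ⟩
  refine ⟨hcq, habs, fun W hW hmax => (hmax Qᶜ habs hW.1.1).symm⟩
end
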